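/- arXiv:1908.03239 — 7 statements merged into one kernel-verified Lean document; each statement's English description precedes it below -/
import Mathlib

section
/- For any linear code C ⊆ F_{q^m}^n, the minimum sum-rank distance equals the minimum, over all invertible block-diagonal matrices A = diag(A_1,...,A_ℓ) with A_i ∈ F_q^{n_i×n_i} invertible, of the minimum Hamming distance of the code C·A. -/
open Matrix Finset

noncomputable def rkWt {K L : Type*} [Field K] [Field L] [Algebra K L] {m : ℕ}
    (B : Module.Basis (Fin m) K L) {p : ℕ} (v : Fin p → L) : ℕ :=
  (Matrix.of (fun a (j : Fin p) => B.repr (v j) a) : Matrix (Fin m) (Fin p) K).rank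

/-- Sum-rank weight for the partition `n 0 + ⋯ + n (ℓ-1)`. -/
noncomputable def srWt {K L : Type*} [Field K] [Field L] [Algebra K L] {m ℓ : ℕ}
    (B : Module.Basis (Fin m) K L) {n : Fin ℓ → ℕ} (c : ∀ i, Fin (n i) → L) : ℕ :=
  ∑ i, rkWt B (c i)

open Classical in
/-- Hamming weight (number of nonzero coordinates). -/
noncomputable def hamWt {L : Type*} [Field L] {ℓ : ℕ} {n : Fin ℓ → ℕ}
    (c : ∀ i, Fin (n i) → L) : ℕ :=
  ∑ i, (Finset.univ.filter (fun j => c i j ≠ 0)).card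

/-- Blockwise right multiplication `c ↦ c ⬝ diag(A_1, …, A_ℓ)` with `A_i` over the base field. -/
noncomputable def blockMul {K L : Type*} [Field K] [Field L] [Algebra K L] {ℓ : ℕ}
    {n : Fin ℓ → ℕ} (A : ∀ i, Matrix (Fin (n i)) (Fin (n i)) K)
    (c : ∀ i, Fin (n i) → L) : ∀ i, Fin (n i) → L :=
  fun i => Matrix.vecMul (c i) ((A i).map (algebraMap K L))

/-! The rank of `M(c)` is the dimension of the `K`-span of the entries of `c`. Right multiplication
by an invertible `K`-matrix does not change it, and it never exceeds the number of nonzero entries,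
so `srWt c ≤ hamWt (c · A)` for every admissible `A`. Conversely, if the columns of `A_i` form a
basis of `K^{n_i}` extending a basis of the kernel of `x ↦ ∑ j, x j • c^{(i)} j`, then
`c^{(i)} A_i` has only `rk M(c^{(i)})` nonzero entries; applied to a codeword of minimal sum-rank
weight this gives the reverse inequality. -/

open Module in
theorem LinearMap.exists_basis_card_filter_ne_zero_le {K V W : Type*} [Field K]
    [AddCommGroup V] [Module K V] [FiniteDimensional K V] [AddCommGroup W] [Module K W]
    [DecidableEq W] (T : V →ₗ[K] W) {ι : Type*} [Fintype ι] (hι : Fintype.card ι = finrank K V) :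
    ∃ b : Basis ι K V, #{i | T (b i) ≠ 0} ≤ finrank K (LinearMap.range T) := by
  obtain ⟨U, hU⟩ := (LinearMap.ker T).exists_isCompl
  have hdim : finrank K U = finrank K (LinearMap.range T) := by
    have := T.finrank_range_add_finrank_ker
    have := Submodule.finrank_add_eq_of_isCompl hU
    omega
  let b₀ : Basis (Fin (finrank K (LinearMap.ker T)) ⊕ Fin (finrank K U)) K V :=
    ((finBasis K _).prod (finBasis K U)).map (Submodule.prodEquivOfIsCompl _ _ hU)
  have hker : ∀ i, T (b₀ (Sum.inl i)) = 0 := fun i => by simp [b₀]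
  let e : (Fin (finrank K (LinearMap.ker T)) ⊕ Fin (finrank K U)) ≃ ι :=
    Fintype.equivOfCardEq (by simp [hι, Submodule.finrank_add_eq_of_isCompl hU])
  refine ⟨b₀.reindex e, ?_⟩
  calc #{i | T (b₀.reindex e i) ≠ 0} = #{j | T (b₀ j) ≠ 0} := card_equiv e.symm (by simp)
    _ ≤ #(univ.map Function.Embedding.inr) := card_le_card fun j hj => by
        cases j with
        | inl i => simp [hker] at hj
        | inr i => simp
    _ = finrank K (LinearMap.range T) := by simp [hdim]

section CoordinateMatrix

variable {K L : Type*} [Field K] [Field L] [Algebra K L] {m : ℕ} (B : Module.Basis (Fin m) K L)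

/-- The matrix representation `M(v)` over `K`. -/
noncomputable def coordMatrix {ι : Type*} (v : ι → L) : Matrix (Fin m) ι K :=
  Matrix.of fun a j => B.repr (v j) a

theorem rkWt_eq_rank_coordMatrix {p : ℕ} (v : Fin p → L) : rkWt B v = (coordMatrix B v).rank :=
  rfl

theorem vecMul_map_algebraMap_apply {ι κ : Type*} [Fintype ι] (v : ι → L) (A : Matrix ι κ K)
    (j : κ) : vecMul v (A.map (algebraMap K L)) j = Fintype.linearCombination K v (Aᵀ j) := by
  simp [vecMul, dotProduct, Fintype.linearCombination_apply, Algebra.smul_def, mul_comm]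

theorem coordMatrix_vecMul_map {ι κ : Type*} [Fintype ι] (v : ι → L) (A : Matrix ι κ K) :
    coordMatrix B (vecMul v (A.map (algebraMap K L))) = coordMatrix B v * A := by
  ext a j
  simp [coordMatrix, vecMul_map_algebraMap_apply, Fintype.linearCombination_apply, mul_apply,
    mul_comm]

theorem rkWt_eq_finrank_span {p : ℕ} (v : Fin p → L) :
    rkWt B v = Module.finrank K (Submodule.span K (Set.range v)) := by
  have hcols : (coordMatrix B v).col = B.equivFun ∘ v := by
    ext j a
    simp [coordMatrix, Module.Basis.equivFun_apply]
  rw [rkWt_eq_rank_coordMatrix, rank_eq_finrank_span_cols, hcols, Set.range_comp,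
    ← LinearEquiv.coe_toLinearMap, Submodule.span_image, LinearEquiv.finrank_map_eq]

theorem rkWt_vecMul_map_of_isUnit {p : ℕ} (v : Fin p → L) {A : Matrix (Fin p) (Fin p) K}
    (hA : IsUnit A) : rkWt B (vecMul v (A.map (algebraMap K L))) = rkWt B v := by
  rw [rkWt_eq_rank_coordMatrix, coordMatrix_vecMul_map]
  exact rank_mul_eq_left_of_isUnit_det A _ ((isUnit_iff_isUnit_det A).mp hA)

open Classical in
theorem rkWt_le_card_ne_zero {p : ℕ} (v : Fin p → L) : rkWt B v ≤ #{j | v j ≠ 0} := by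
  have hspan : Submodule.span K (Set.range v) ≤ Submodule.span K (image v {j | v j ≠ 0}) := by
    rw [Submodule.span_le]
    rintro _ ⟨j, rfl⟩
    by_cases hj : v j = 0
    · simp [hj]
    · exact Submodule.subset_span (by simpa using ⟨j, hj, rfl⟩)
  calc rkWt B v ≤ Module.finrank K (Submodule.span K (image v {j | v j ≠ 0} : Set L)) :=
        (rkWt_eq_finrank_span B v).trans_le (Submodule.finrank_mono hspan)
    _ ≤ #{j | v j ≠ 0} := (finrank_span_finset_le_card _).trans card_image_le

open Classical in
theorem exists_isUnit_card_vecMul_map_ne_zero_le {p : ℕ} (v : Fin p → L) :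
    ∃ A : Matrix (Fin p) (Fin p) K, IsUnit A ∧
      #{j | vecMul v (A.map (algebraMap K L)) j ≠ 0} ≤ rkWt B v := by
  obtain ⟨b, hb⟩ := (Fintype.linearCombination K v).exists_basis_card_filter_ne_zero_le
    (ι := Fin p) (by simp)
  refine ⟨(Pi.basisFun K (Fin p)).toMatrix b, ?_, ?_⟩
  · have := (Pi.basisFun K (Fin p)).invertibleToMatrix b
    exact isUnit_of_invertible _
  · rw [rkWt_eq_finrank_span, ← Fintype.range_linearCombination]
    convert hb using 4 with j
    rw [vecMul_map_algebraMap_apply]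
    congr 2

end CoordinateMatrix

section BlockMul

variable {K L : Type*} [Field K] [Field L] [Algebra K L] {m ℓ : ℕ} (B : Module.Basis (Fin m) K L)
  {n : Fin ℓ → ℕ}

theorem srWt_le_hamWt_blockMul {A : ∀ i, Matrix (Fin (n i)) (Fin (n i)) K}
    (hA : ∀ i, IsUnit (A i)) (c : ∀ i, Fin (n i) → L) : srWt B c ≤ hamWt (blockMul A c) := by
  refine sum_le_sum fun i _ => ?_
  rw [← rkWt_vecMul_map_of_isUnit B (c i) (hA i)]
  exact rkWt_le_card_ne_zero B _

theorem exists_isUnit_hamWt_blockMul_le_srWt (c : ∀ i, Fin (n i) → L) :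
    ∃ A : ∀ i, Matrix (Fin (n i)) (Fin (n i)) K,
      (∀ i, IsUnit (A i)) ∧ hamWt (blockMul A c) ≤ srWt B c := by
  choose A hA hcard using fun i => exists_isUnit_card_vecMul_map_ne_zero_le B (c i)
  exact ⟨A, hA, sum_le_sum fun i _ => hcard i⟩

end BlockMul

/-- the minimum sum-rank distance of a linear code equals the minimum, over
invertible block-diagonal matrices `A = diag(A_1,…,A_ℓ)` over the base field, of the
minimum Hamming distance of `C·A`. -/
theorem srDist_eq_min_hamming {K L : Type*} [Field K] [Field L] [Algebra K L]
    {m ℓ : ℕ} (B : Module.Basis (Fin m) K L) {n : Fin ℓ → ℕ}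
    (C : Submodule L (∀ i, Fin (n i) → L)) (hC : C ≠ ⊥) :
    sInf {w | ∃ c ∈ C, c ≠ 0 ∧ w = srWt B c} =
      sInf {d | ∃ A : ∀ i, Matrix (Fin (n i)) (Fin (n i)) K,
        (∀ i, IsUnit (A i)) ∧
        d = sInf {w | ∃ c ∈ C, c ≠ 0 ∧ w = hamWt (blockMul A c)}} := by
  obtain ⟨c₁, hc₁C, hc₁⟩ := Submodule.exists_mem_ne_zero_of_ne_bot hC
  apply le_antisymm
  · refine le_csInf ?_ ?_
    · exact ⟨_, fun _ => 1, fun _ => isUnit_one, rfl⟩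
    rintro _ ⟨A, hA, rfl⟩
    refine le_csInf ⟨_, c₁, hc₁C, hc₁, rfl⟩ ?_
    rintro _ ⟨c, hcC, hc, rfl⟩
    exact le_trans (Nat.sInf_le ⟨c, hcC, hc, rfl⟩) (srWt_le_hamWt_blockMul B hA c)
  · have hne : {w | ∃ c ∈ C, c ≠ 0 ∧ w = srWt B c}.Nonempty := ⟨_, c₁, hc₁C, hc₁, rfl⟩
    obtain ⟨c₀, hc₀C, hc₀, hmin⟩ := Nat.sInf_mem hne
    obtain ⟨A, hA, hle⟩ := exists_isUnit_hamWt_blockMul_le_srWt B c₀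
    calc _ ≤ sInf {w | ∃ c ∈ C, c ≠ 0 ∧ w = hamWt (blockMul A c)} :=
          Nat.sInf_le (by exact ⟨A, hA, rfl⟩)
      _ ≤ hamWt (blockMul A c₀) := Nat.sInf_le ⟨c₀, hc₀C, hc₀, rfl⟩
      _ ≤ _ := hle.trans_eq hmin.symm
end

section
/- Let C ⊆ F_{q^m}^n be a linear code with d_SR(C) ≥ 3 and redundancy r = n − dim(C), for a sum-rank length partition n = n_1 + ... + n_ℓ. Then n ≤ ⌊ℓmr/2⌋; equivalently, the average sublength satisfies (Σ_i n_i)/ℓ ≤ mr/2. -/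
/-!
Expanding every entry in the basis `B` turns block `i` of a word into an `m × n_i` matrix over
`K`. Deleting fewer than `d_SR(C)` of the `ℓ m` rows is injective on `C`, since a nonzero word
vanishing off those rows has sum-rank weight at most their number. Comparing `K`-dimensions,
deleting two rows `x ≠ y` therefore costs at most the redundancy: `n_x + n_y ≤ m r`, where a
row in block `i` has `n_i` entries. Averaging over all pairs of the `ℓ m ≥ 3` rows, whose
lengths add up to `m n`, gives `2 m n ≤ ℓ m · m r`.
-/

open Matrix Finset

theorem two_mul_sum_le_card_mul_of_add_le {ι : Type*} [Fintype ι]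
    (w : ι → ℕ) (s : ℕ) (hcard : 1 < Fintype.card ι)
    (h : ∀ x y, x ≠ y → w x + w y ≤ s) :
    2 * ∑ x, w x ≤ Fintype.card ι * s := by
  classical
  obtain ⟨k, hk⟩ := Nat.exists_eq_add_one_of_ne_zero (n := Fintype.card ι) (by omega)
  -- double counting of `∑_{x ≠ y} (w x + w y)`
  set T := ∑ x, ∑ y ∈ univ.erase x, (w x + w y)
  have hT : 2 * ∑ x, w x + T = (k + 1) * (2 * ∑ x, w x) := by
    have hfull : ∑ x, ∑ y, (w x + w y) = (k + 1) * (2 * ∑ x, w x) := by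
      simp only [sum_add_distrib, sum_const, card_univ, hk, smul_eq_mul, ← mul_sum]
      ring
    rw [← hfull, mul_sum, ← sum_add_distrib]
    refine sum_congr rfl fun x _ => ?_
    rw [← add_sum_erase _ _ (mem_univ x)]
    ring
  have hTle : T ≤ (k + 1) * (k * s) := by
    refine (sum_le_sum fun x _ => sum_le_sum fun y hy => h x y (ne_of_mem_erase hy).symm).trans ?_
    simp [card_erase_of_mem, hk]
  rw [hk]
  refine le_of_mul_le_mul_left (a := k) ?_ (by omega)
  nlinarith

theorem rkWt_le_card_of_repr_eq_zero {K L : Type*} [Field K] [Field L] [Algebra K L] {m : ℕ}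
    (B : Module.Basis (Fin m) K L) {p : ℕ} (v : Fin p → L) (s : Finset (Fin m))
    (h : ∀ a ∉ s, ∀ j, B.repr (v j) a = 0) : rkWt B v ≤ s.card := by
  refine rank_le_card_of_support_subset _ s fun a ha => ?_
  by_contra has
  exact ha (funext fun j => h a has j)

theorem srWt_le_card_of_repr_eq_zero {K L : Type*} [Field K] [Field L] [Algebra K L] {m ℓ : ℕ}
    (B : Module.Basis (Fin m) K L) {n : Fin ℓ → ℕ} (c : ∀ i, Fin (n i) → L)
    (S : Finset (Fin ℓ × Fin m)) (h : ∀ i j a, (i, a) ∉ S → B.repr (c i j) a = 0) :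
    srWt B c ≤ S.card := by
  classical
  rw [card_eq_sum_card_fiberwise (f := Prod.fst) (t := univ) fun _ _ => mem_univ _]
  refine sum_le_sum fun i _ => le_trans ?_ (card_image_le (f := Prod.snd))
  refine rkWt_le_card_of_repr_eq_zero B (c i) _ fun a ha j => h i j a fun hia => ha ?_
  exact mem_image.2 ⟨(i, a), mem_filter.2 ⟨hia, rfl⟩, rfl⟩

theorem srWt_le_mul {K L : Type*} [Field K] [Field L] [Algebra K L] {m ℓ : ℕ}
    (B : Module.Basis (Fin m) K L) {n : Fin ℓ → ℕ} (c : ∀ i, Fin (n i) → L) :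
    srWt B c ≤ ℓ * m :=
  (sum_le_sum fun i _ => rank_le_height _).trans (by simp)

noncomputable def rowPuncture {K L : Type*} [Field K] [Field L] [Algebra K L] {m ℓ : ℕ}
    (B : Module.Basis (Fin m) K L) (n : Fin ℓ → ℕ) (S : Finset (Fin ℓ × Fin m)) :
    (∀ i, Fin (n i) → L) →ₗ[K] ∀ x : {x : Fin ℓ × Fin m // x ∉ S}, Fin (n x.1.1) → K where
  toFun c x j := B.repr (c x.1.1 j) x.1.2
  map_add' c d := by ext; simp
  map_smul' a c := by ext; simp

@[simp]
theorem rowPuncture_apply {K L : Type*} [Field K] [Field L] [Algebra K L] {m ℓ : ℕ}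
    (B : Module.Basis (Fin m) K L) (n : Fin ℓ → ℕ) (S : Finset (Fin ℓ × Fin m))
    (c : ∀ i, Fin (n i) → L) (x : {x : Fin ℓ × Fin m // x ∉ S}) (j : Fin (n x.1.1)) :
    rowPuncture B n S c x j = B.repr (c x.1.1 j) x.1.2 :=
  rfl

theorem sum_comp_fst_eq_mul_sum {ℓ m : ℕ} (n : Fin ℓ → ℕ) :
    ∑ x : Fin ℓ × Fin m, n x.1 = m * ∑ i, n i := by
  simp [Fintype.sum_prod_type, mul_sum]

theorem finrank_rowPuncture_codomain_add_sum {K : Type*} [Field K] {m ℓ : ℕ} (n : Fin ℓ → ℕ)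
    (S : Finset (Fin ℓ × Fin m)) :
    Module.finrank K (∀ x : {x : Fin ℓ × Fin m // x ∉ S}, Fin (n x.1.1) → K) + ∑ x ∈ S, n x.1
      = m * ∑ i, n i := by
  classical
  rw [Module.finrank_pi_fintype]
  simp only [Module.finrank_fin_fun]
  rw [← sum_subtype Sᶜ (fun x => mem_compl) (fun x => n x.1), sum_compl_add_sum,
    sum_comp_fst_eq_mul_sum]

theorem finrank_mul_add_sum_le_of_card_lt {K L : Type*} [Field K] [Field L] [Algebra K L]
    {m ℓ : ℕ} (B : Module.Basis (Fin m) K L) {n : Fin ℓ → ℕ}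
    (C : Submodule L (∀ i, Fin (n i) → L)) {d : ℕ} (hd : ∀ c ∈ C, c ≠ 0 → d ≤ srWt B c)
    (S : Finset (Fin ℓ × Fin m)) (hS : S.card < d) :
    m * Module.finrank L C + ∑ x ∈ S, n x.1 ≤ m * ∑ i, n i := by
  have : Module.Finite K L := Module.Finite.of_basis B
  let f : C →ₗ[K] _ := rowPuncture B n S ∘ₗ C.subtype.restrictScalars K
  have hf : Function.Injective f := by
    rw [← LinearMap.ker_eq_bot, LinearMap.ker_eq_bot']
    intro c hc
    by_contra hc0
    have hle : srWt B c.1 ≤ S.card := srWt_le_card_of_repr_eq_zero B c.1 S fun i j a hia => by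
      simpa [f] using congrFun (congrFun hc ⟨(i, a), hia⟩) j
    have hge : d ≤ srWt B c.1 := hd c.1 c.2 (by simpa using hc0)
    omega
  have hm : Module.finrank K L = m := by simpa using Module.finrank_eq_card_basis B
  rw [← finrank_rowPuncture_codomain_add_sum n S (K := K)]
  refine Nat.add_le_add_right ?_ _
  calc m * Module.finrank L C = Module.finrank K C := by
        rw [← hm, Module.finrank_mul_finrank K L C]
    _ ≤ _ := LinearMap.finrank_le_finrank_of_injective hf

theorem length_le_half_ell_m_r_general {K L : Type*} [Field K] [Field L]
    [Algebra K L] {m ℓ : ℕ} (B : Module.Basis (Fin m) K L) {n : Fin ℓ → ℕ}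
    (C : Submodule L (∀ i, Fin (n i) → L)) (hC : C ≠ ⊥) (r : ℕ)
    (hr : Module.finrank L C + r = ∑ i, n i)
    (hd : ∀ c ∈ C, c ≠ 0 → 3 ≤ srWt B c) :
    2 * ∑ i, n i ≤ ℓ * m * r := by
  obtain ⟨c, hcC, hc0⟩ := (Submodule.ne_bot_iff C).mp hC
  have hrows : 3 ≤ ℓ * m := (hd c hcC hc0).trans (srWt_le_mul B c)
  have hpair : ∀ x y : Fin ℓ × Fin m, x ≠ y → n x.1 + n y.1 ≤ m * r := by
    intro x y hxy
    have h := finrank_mul_add_sum_le_of_card_lt B C hd {x, y} (by rw [card_pair hxy]; norm_num)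
    rw [sum_pair hxy, ← hr, mul_add] at h
    omega
  have h := two_mul_sum_le_card_mul_of_add_le (fun x : Fin ℓ × Fin m => n x.1) (m * r)
    (by rw [Fintype.card_prod, Fintype.card_fin, Fintype.card_fin]; omega) hpair
  rw [sum_comp_fst_eq_mul_sum, Fintype.card_prod, Fintype.card_fin, Fintype.card_fin] at h
  have hm : 0 < m := Nat.pos_of_ne_zero (by rintro rfl; omega)
  refine le_of_mul_le_mul_left (a := m) ?_ hm
  calc m * (2 * ∑ i, n i) = 2 * (m * ∑ i, n i) := by ring
    _ ≤ ℓ * m * (m * r) := h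
    _ = m * (ℓ * m * r) := by ring

/-- if `C ⊆ F_{q^m}^n` is a (nonzero) linear code with `d_SR(C) ≥ 3` and
redundancy `r = n − dim C` for the partition `n = n_1 + ⋯ + n_ℓ`, then `n ≤ ⌊ℓmr/2⌋`,
i.e. `2n ≤ ℓmr`; equivalently the average sublength is at most `mr/2`. -/
theorem length_le_half_ell_m_r {K L : Type*} [Field K] [Fintype K] [Field L] [Fintype L]
    [Algebra K L] {m ℓ : ℕ} (B : Module.Basis (Fin m) K L) {n : Fin ℓ → ℕ}
    (hn : ∀ i, 0 < n i)
    (C : Submodule L (∀ i, Fin (n i) → L)) (hC : C ≠ ⊥) (r : ℕ)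
    (hr : Module.finrank L C + r = ∑ i, n i)
    (hd : ∀ c ∈ C, c ≠ 0 → 3 ≤ srWt B c) :
    2 * ∑ i, n i ≤ ℓ * m * r :=
  length_le_half_ell_m_r_general B C hC r hr hd
end

section
/- Let 1 ≤ N ≤ r and let s be the remainder of r divided by N. If P = {H_i}_{i∈I} is a partial N-spread in F_q^r (a family of N-dimensional subspaces pairwise intersecting trivially), then |I| ≤ (q^r − q^s)/(q^N − 1). -/
/-- a partial `N`-spread in `F_q^r` has at most `(q^r − q^s)/(q^N − 1)`
elements, where `s = r % N`. -/
theorem partial_spread_card_upper_bound {F : Type*} [Field F] [Fintype F]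
    {r N : ℕ} (hN : 1 ≤ N) (hNr : N ≤ r)
    {I : Type*} [Fintype I] (H : I → Submodule F (Fin r → F))
    (hdim : ∀ i, Module.finrank F (H i) = N)
    (hspread : ∀ i j, i ≠ j → H i ⊓ H j = ⊥) :
    Fintype.card I ≤
      (Fintype.card F ^ r - Fintype.card F ^ (r % N)) / (Fintype.card F ^ N - 1) := by
  classical
  set q := Fintype.card F with hq
  have hq2 : 2 ≤ q := Fintype.one_lt_card
  set V := Fin r → F
  -- the finsets of nonzero vectors of each `H i`
  let T : I → Finset V := fun i => Set.toFinset ((H i : Set V) \ {0})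
  have hTcard : ∀ i, (T i).card = q ^ N - 1 := by
    intro i
    have h1 : Fintype.card (H i) = q ^ N := by
      rw [Module.card_eq_pow_finrank (K := F), hdim]
    have h2 : ((H i : Set V)).toFinset.card = q ^ N := by
      rw [Set.toFinset_card]
      simpa using h1
    simp only [T, Set.toFinset_diff, Set.toFinset_singleton]
    rw [Finset.sdiff_singleton_eq_erase, Finset.card_erase_of_mem (by simp), h2]
  have hdisj : ∀ i j, i ≠ j → Disjoint (T i) (T j) := by
    intro i j hij
    rw [Finset.disjoint_left]
    intro x hx hx'
    simp only [T, Set.mem_toFinset, Set.mem_diff, Set.mem_singleton_iff] at hx hx'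
    have : x ∈ H i ⊓ H j := ⟨hx.1, hx'.1⟩
    rw [hspread i j hij] at this
    exact hx.2 (by simpa using this)
  -- the union of the `T i` lives in the nonzero vectors of `V`
  have hbU : (Finset.univ.biUnion T).card = Fintype.card I * (q ^ N - 1) := by
    rw [Finset.card_biUnion (fun i _ j _ h => hdisj i j h)]
    simp [hTcard, Finset.sum_const, Finset.card_univ]
  have hsub : Finset.univ.biUnion T ⊆ (Finset.univ : Finset V).erase 0 := by
    intro x hx
    simp only [Finset.mem_biUnion] at hx
    obtain ⟨i, _, hx⟩ := hx
    simp only [T, Set.mem_toFinset, Set.mem_diff, Set.mem_singleton_iff] at hx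
    simp [hx.2]
  have hVcard : Fintype.card V = q ^ r := by simp [V, q]
  have hmul : Fintype.card I * (q ^ N - 1) ≤ q ^ r - 1 := by
    have := Finset.card_le_card hsub
    rw [hbU, Finset.card_erase_of_mem (Finset.mem_univ _), Finset.card_univ, hVcard] at this
    exact this
  have hqN1 : 1 < q ^ N := Nat.one_lt_pow (by omega) (by omega)
  have hle : Fintype.card I ≤ (q ^ r - 1) / (q ^ N - 1) :=
    Nat.le_div_iff_mul_le (by omega) |>.mpr hmul
  -- arithmetic: `(q^r - 1) / (q^N - 1) = (q^r - q^(r % N)) / (q^N - 1)`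
  have key : (q ^ r - 1) / (q ^ N - 1) = (q ^ r - q ^ (r % N)) / (q ^ N - 1) := by
    set s := r % N with hs
    have hsN : s < N := Nat.mod_lt _ (by omega)
    have hm : r = s + N * (r / N) := by have := Nat.div_add_mod r N; omega
    have hdvd : q ^ N - 1 ∣ q ^ (N * (r / N)) - 1 := by
      rw [pow_mul]
      simpa using Nat.sub_dvd_pow_sub_pow (q ^ N) 1 (r / N)
    have hdvd2 : q ^ N - 1 ∣ q ^ r - q ^ s := by
      have h : q ^ r - q ^ s = q ^ s * (q ^ (N * (r / N)) - 1) := by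
        rw [Nat.mul_sub, mul_one, ← pow_add, ← hm]
      rw [h]
      exact hdvd.mul_left _
    obtain ⟨k, hk⟩ := hdvd2
    have hqs1 : 1 ≤ q ^ s := Nat.one_le_pow _ _ (by omega)
    have hqsr : q ^ s ≤ q ^ r := Nat.pow_le_pow_right (by omega) (by omega)
    have hqsN : q ^ s < q ^ N := Nat.pow_lt_pow_right (by omega) hsN
    have hsplit : q ^ r - 1 = (q ^ N - 1) * k + (q ^ s - 1) := by omega
    rw [hsplit, hk, Nat.mul_add_div (by omega), Nat.div_eq_of_lt (by omega),
      Nat.mul_div_cancel_left _ (by omega), add_zero]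
  rw [← key]
  exact hle
end

section
/- Let N ≤ r, and let C ⊆ F_q^n be a linear code (m = 1) with sum-rank length partition n = ℓN into equal sublengths, parity-check matrix H = (H_1,...,H_ℓ) ∈ F_q^{r×n} with H_i ∈ F_q^{r×N}. Then d_SR(C) ≥ 3 and r = n − dim(C) if and only if each H_i has rank N (i.e., its column space H_i := Col(H_i) has dimension N) and {Col(H_1),...,Col(H_ℓ)} is a partial N-spread in F_q^r. -/
open Matrix Finset

open Classical in
/-- Sum-rank weight for `m = 1` and equal sublengths `N`: number of nonzero blocks. -/
noncomputable def srwt {F : Type*} [Field F] {ℓ N : ℕ} (c : Fin ℓ → Fin N → F) : ℕ :=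
  (Finset.univ.filter (fun i => c i ≠ 0)).card

/-- Syndrome map `c ↦ ∑ i, H_i c^(i)ᵀ` of the block parity-check matrix `H = (H_1,…,H_ℓ)`. -/
noncomputable def synd {F : Type*} [Field F] {ℓ N r : ℕ}
    (H : Fin ℓ → Matrix (Fin r) (Fin N) F) :
    (Fin ℓ → Fin N → F) →ₗ[F] (Fin r → F) :=
  ∑ i, ((H i).mulVecLin).comp (LinearMap.proj i)

lemma synd_apply {F : Type*} [Field F] {ℓ N r : ℕ}
    (H : Fin ℓ → Matrix (Fin r) (Fin N) F) (c : Fin ℓ → Fin N → F) :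
    synd H c = ∑ i, (H i) *ᵥ (c i) := by
  simp [synd, LinearMap.sum_apply]

lemma rank_eq_iff_inj {F : Type*} [Field F] {N r : ℕ} (A : Matrix (Fin r) (Fin N) F) :
    A.rank = N ↔ Function.Injective A.mulVecLin := by
  have h := LinearMap.finrank_range_add_finrank_ker A.mulVecLin
  rw [Module.finrank_pi] at h
  simp only [Fintype.card_fin] at h
  rw [Matrix.rank, ← LinearMap.ker_eq_bot]
  constructor
  · intro hr
    have : Module.finrank F (LinearMap.ker A.mulVecLin) = 0 := by omega
    exact Submodule.finrank_eq_zero.mp this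
  · intro hk
    rw [hk] at h
    simp at h
    omega

lemma srwt_single {F : Type*} [Field F] {ℓ N : ℕ} (i : Fin ℓ) (x : Fin N → F)
    (hx : x ≠ 0) : srwt (Pi.single i x) = 1 := by
  classical
  unfold srwt
  rw [Finset.card_eq_one]
  refine ⟨i, ?_⟩
  ext j
  simp only [mem_filter, mem_univ, true_and, mem_singleton]
  constructor
  · intro hj
    by_contra hne
    exact hj (by simp [Pi.single_eq_of_ne hne])
  · rintro rfl; simpa using hx


/-- for `m = 1`, `n = ℓN` and a rank-`r` block parity-check matrix
`H = (H_1,…,H_ℓ)` of `C = ker(synd H)`: `d_SR(C) ≥ 3` and `r = n − dim C` iff each `H_i`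
has rank `N` and the column spaces `Col(H_1),…,Col(H_ℓ)` form a partial `N`-spread. -/
theorem srHamming_iff_partial_spread {F : Type*} [Field F] {ℓ N r : ℕ} (hNr : N ≤ r)
    (H : Fin ℓ → Matrix (Fin r) (Fin N) F)
    (hfull : Function.Surjective (synd H)) :
    ((∀ c ∈ LinearMap.ker (synd H), c ≠ 0 → 3 ≤ srwt c) ∧
      Module.finrank F (LinearMap.ker (synd H)) + r = ℓ * N) ↔
    ((∀ i, (H i).rank = N) ∧
      ∀ i j, i ≠ j →
        LinearMap.range (H i).mulVecLin ⊓ LinearMap.range (H j).mulVecLin = ⊥) := by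
  classical
  -- the dimension condition is automatic
  have hdim : Module.finrank F (LinearMap.ker (synd H)) + r = ℓ * N := by
    have h := LinearMap.finrank_range_add_finrank_ker (synd H)
    rw [LinearMap.range_eq_top.mpr hfull] at h
    have h1 : Module.finrank F (⊤ : Submodule F (Fin r → F)) = r := by
      rw [finrank_top, Module.finrank_pi]; simp
    have h2 : Module.finrank F (Fin ℓ → Fin N → F) = ℓ * N := by
      rw [Module.finrank_pi_fintype]
      simp [Module.finrank_pi]
    rw [h1, h2] at h
    omega
  rw [and_iff_left hdim]
  constructor
  · intro hw
    constructor
    · intro i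
      rw [rank_eq_iff_inj]
      rw [← LinearMap.ker_eq_bot, eq_bot_iff]
      intro x hx
      simp only [LinearMap.mem_ker, Matrix.mulVecLin_apply] at hx
      by_contra hxne
      have hxne : x ≠ 0 := fun h => hxne (h ▸ Submodule.zero_mem _)
      have hmem : Pi.single i x ∈ LinearMap.ker (synd H) := by
        rw [LinearMap.mem_ker, synd_apply]
        rw [Finset.sum_eq_single i]
        · simpa using hx
        · intro j _ hj; simp [Pi.single_eq_of_ne hj]
        · simp
      have := hw _ hmem (by
        intro h
        exact hxne (by simpa using congrFun h i))
      rw [srwt_single i x hxne] at this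
      omega
    · intro i j hij
      rw [eq_bot_iff]
      rintro v ⟨⟨x, hx⟩, ⟨y, hy⟩⟩
      simp only [Matrix.mulVecLin_apply] at hx hy
      by_contra hvne
      have hvne : v ≠ 0 := fun h => hvne (h ▸ Submodule.zero_mem _)
      set c : Fin ℓ → Fin N → F := Pi.single i x + Pi.single j (-y) with hc
      have hci : c i = x := by
        simp [hc, Pi.single_eq_of_ne hij, hij, hij.symm]
      have hcj : c j = -y := by
        simp [hc, Pi.single_eq_of_ne hij.symm, hij, hij.symm]
      have hxne : x ≠ 0 := by
        rintro rfl; rw [Matrix.mulVec_zero] at hx; exact hvne hx.symm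
      have hcne : c ≠ 0 := by
        intro h
        apply hxne
        rw [← hci, h]; rfl
      have hmem : c ∈ LinearMap.ker (synd H) := by
        rw [LinearMap.mem_ker, synd_apply]
        have : ∀ k ∈ (Finset.univ : Finset (Fin ℓ)), k ∉ ({i, j} : Finset (Fin ℓ)) →
            (H k) *ᵥ (c k) = 0 := by
          intro k _ hk
          simp only [mem_insert, mem_singleton, not_or] at hk
          have : c k = 0 := by
            simp [hc, hk.1, hk.2]
          rw [this, Matrix.mulVec_zero]
        rw [← Finset.sum_subset (Finset.subset_univ {i, j}) this]
        rw [Finset.sum_pair hij, hci, hcj, hx, Matrix.mulVec_neg, hy]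
        simp
      have hle : srwt c ≤ 2 := by
        unfold srwt
        calc (Finset.univ.filter (fun k => c k ≠ 0)).card
            ≤ ({i, j} : Finset (Fin ℓ)).card := by
              apply Finset.card_le_card
              intro k hk
              simp only [mem_filter, mem_univ, true_and] at hk
              by_contra hkk
              simp only [mem_insert, mem_singleton, not_or] at hkk
              exact hk (by simp [hc, hkk.1, hkk.2])
          _ ≤ 2 := Finset.card_insert_le _ _ |>.trans (by simp)
      have := hw c hmem hcne
      omega
  · rintro ⟨hrank, hspread⟩ c hmem hcne
    have hinj : ∀ i, Function.Injective (H i).mulVecLin := fun i =>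
      (rank_eq_iff_inj (H i)).mp (hrank i)
    by_contra hlt
    push_neg at hlt
    set S := Finset.univ.filter (fun i => c i ≠ 0) with hS
    have hSzero : ∀ k ∉ S, c k = 0 := by
      intro k hk; by_contra h; exact hk (by simp [hS, h])
    have hsum : ∑ k ∈ S, (H k) *ᵥ (c k) = 0 := by
      rw [LinearMap.mem_ker, synd_apply] at hmem
      rw [Finset.sum_subset (Finset.subset_univ S)
        (fun k _ hk => by simp [hSzero k hk])]
      exact hmem
    have hScard : S.card ≤ 2 := by
      have : srwt c ≤ 2 := by omega
      exact this
    interval_cases hcard : S.card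
    · -- card 0: c = 0
      apply hcne
      funext k
      have : k ∉ S := by rw [Finset.card_eq_zero] at hcard; simp [hcard]
      exact hSzero k this
    · obtain ⟨i, hi⟩ := Finset.card_eq_one.mp hcard
      rw [hi, Finset.sum_singleton] at hsum
      have : c i = 0 := by
        apply hinj i
        simpa using hsum
      have hiS : i ∈ S := by rw [hi]; simp
      rw [hS, Finset.mem_filter] at hiS
      exact hiS.2 this
    · obtain ⟨i, j, hij, hij2⟩ := Finset.card_eq_two.mp hcard
      rw [hij2, Finset.sum_pair hij] at hsum
      have hv : (H i) *ᵥ (c i) ∈ LinearMap.range (H i).mulVecLin ⊓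
          LinearMap.range (H j).mulVecLin := by
        constructor
        · exact ⟨c i, rfl⟩
        · refine ⟨-(c j), ?_⟩
          simp only [Matrix.mulVecLin_apply, Matrix.mulVec_neg]
          rw [eq_neg_of_add_eq_zero_left hsum]
      rw [hspread i j hij] at hv
      have : c i = 0 := by
        apply hinj i
        simpa using hv
      have hiS : i ∈ S := by rw [hij2]; simp
      rw [hS, Finset.mem_filter] at hiS
      exact hiS.2 this
end

section
/- For m = 1 and a proper sum-rank Hamming code C ⊆ F_q^n with equal sublengths N, redundancy r, and s the remainder of r mod N, the length satisfies N((q^r − q^s)/(q^N − 1) − q^s + 1) ≤ n ≤ N(q^r − q^s)/(q^N − 1), with equality throughout when s = 0, i.e., then n = N(q^r − 1)/(q^N − 1). -/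
open Finset

/-- A linear code in `F^{ℓN}` (with `m = 1` and equal sublengths `N`) with minimum
sum-rank distance at least `3` and redundancy `r`. -/
def IsGoodCode (F : Type*) [Field F] (ℓ N r : ℕ)
    (C : Submodule F (Fin ℓ → Fin N → F)) : Prop :=
  (∀ c ∈ C, c ≠ 0 → 3 ≤ srwt c) ∧ Module.finrank F C + r = ℓ * N

/-- A proper sum-rank Hamming code: a code as above for which the number of shots `ℓ`
is maximal. -/
def IsProperSRHamming (F : Type*) [Field F] (ℓ N r : ℕ)
    (C : Submodule F (Fin ℓ → Fin N → F)) : Prop :=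
  IsGoodCode F ℓ N r C ∧
    ∀ ℓ' : ℕ, ℓ < ℓ' → ¬ ∃ C' : Submodule F (Fin ℓ' → Fin N → F), IsGoodCode F ℓ' N r C'

/-!
Reading a code block by block through its quotient map, a code with `ℓ` blocks of size `N`,
redundancy `r` and sum-rank distance at least `3` is the same as `ℓ` copies of `F^N` in `F^r`
meeting pairwise trivially (a partial `N`-spread). Counting nonzero vectors gives
`ℓ (q^N - 1) ≤ q^r - 1`, which is the upper bound. For the lower bound write `r = kN + s`:
if `F^d ≅ 𝔽_{q^d}` carries a partial spread, then in `F^N × 𝔽_{q^d}` the graphs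
`{(x, a x)}` for `a ∈ 𝔽_{q^d}` and the old spread placed in `0 × 𝔽_{q^d}` form one of
`q^d` more members, so `F^(kN+s)` carries one of size `1 + ∑_{0<i<k} q^(iN+s)`; maximality of
`ℓ` then forces `ℓ` to be at least that large.
-/

open Module

section

variable {F : Type*} [Field F]

section PartialSpread

variable {U V W ι κ : Type*} [AddCommGroup U] [Module F U] [AddCommGroup V] [Module F V]
  [AddCommGroup W] [Module F W]

/-- The members of the partial spread are the ranges of the injective maps `u i`. -/
def IsPartialSpread (u : ι → U →ₗ[F] V) : Prop :=
  (∀ i, Function.Injective (u i)) ∧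
    Pairwise fun i j => Disjoint (LinearMap.range (u i)) (LinearMap.range (u j))

variable {u : ι → U →ₗ[F] V}

theorem IsPartialSpread.eq_zero_of_apply_eq (hu : IsPartialSpread u) {i j : ι} (hij : i ≠ j)
    {x y : U} (h : u i x = u j y) : x = 0 :=
  (map_eq_zero_iff _ (hu.1 i)).1 <|
    Submodule.disjoint_def.1 (hu.2 hij) _ (LinearMap.mem_range_self _ x) ⟨y, h.symm⟩

theorem IsPartialSpread.map (hu : IsPartialSpread u) {e : V →ₗ[F] W}
    (he : Function.Injective e) : IsPartialSpread fun i => e ∘ₗ u i :=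
  ⟨fun i => he.comp (hu.1 i), fun i j hij => by
    simpa only [LinearMap.range_comp] using Submodule.disjoint_map he (hu.2 hij)⟩

theorem IsPartialSpread.comp (hu : IsPartialSpread u) {σ : κ → ι}
    (hσ : Function.Injective σ) : IsPartialSpread (u ∘ σ) :=
  ⟨fun i => hu.1 (σ i), fun _ _ hij => hu.2 (hσ.ne hij)⟩

theorem IsPartialSpread.card_mul_le [Fintype ι] [Fintype U] [Fintype V]
    (hu : IsPartialSpread u) : Fintype.card ι * (Fintype.card U - 1) + 1 ≤ Fintype.card V := by
  classical
  have hinj : Function.Injective fun p : ι × {x : U // x ≠ 0} =>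
      (⟨u p.1 p.2, (map_ne_zero_iff _ (hu.1 p.1)).2 p.2.2⟩ : {y : V // y ≠ 0}) := by
    rintro ⟨i, x, hx⟩ ⟨j, y, hy⟩ h
    have hxy : u i x = u j y := congrArg Subtype.val h
    obtain rfl : i = j := by
      by_contra hij
      exact hx (hu.eq_zero_of_apply_eq hij hxy)
    obtain rfl : x = y := hu.1 i hxy
    rfl
  have := Fintype.card_le_of_injective _ hinj
  simp only [Fintype.card_prod, ne_eq, Fintype.card_subtype_compl, Fintype.card_unique] at this
  have := Fintype.card_pos (α := V)
  omega

theorem IsPartialSpread.sumElim_graph {K : Type*} [Field K] [Algebra F K] {u : ι → U →ₗ[F] K}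
    (hu : IsPartialSpread u) {j : U →ₗ[F] K} (hj : Function.Injective j) :
    IsPartialSpread (Sum.elim (fun a : K => LinearMap.id.prod (LinearMap.mulLeft F a ∘ₗ j))
      fun i => LinearMap.inr F U K ∘ₗ u i) := by
  refine ⟨?_, ?_⟩
  · rintro (a | i)
    · exact fun x y h => congrArg Prod.fst h
    · exact LinearMap.inr_injective.comp (hu.1 i)
  rintro (a | i) (b | i') hne <;> rw [Submodule.disjoint_def] <;> rintro _ ⟨x, rfl⟩ ⟨y, hy⟩ <;>
    simp only [Sum.elim_inl, Sum.elim_inr, LinearMap.coe_comp, Function.comp_apply,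
      LinearMap.prod_apply, Function.prod_apply, LinearMap.id_apply, LinearMap.mulLeft_apply,
      LinearMap.inr_apply, Prod.mk.injEq, Prod.mk_eq_zero] at hy ⊢
  · obtain ⟨rfl, hyx⟩ := hy
    have hab : b - a ≠ 0 := sub_ne_zero.2 fun h => hne (by rw [h])
    have : j y = 0 := (mul_eq_zero.1 (by rw [sub_mul, hyx, sub_self])).resolve_left hab
    simp [(map_eq_zero_iff _ hj).1 this]
  · simp [← hy.1]
  · simp [← hy.2, hy.1]
  · have hii' : i ≠ i' := fun h => hne (by rw [h])
    simp [hu.eq_zero_of_apply_eq hii' hy.2.symm]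

end PartialSpread

def HasPartialSpread (F : Type*) [Field F] (N d t : ℕ) : Prop :=
  ∃ u : Fin t → (Fin N → F) →ₗ[F] (Fin d → F), IsPartialSpread u

theorem IsPartialSpread.hasPartialSpread {V ι : Type*} [AddCommGroup V] [Module F V]
    [FiniteDimensional F V] [Fintype ι] {N : ℕ} {u : ι → (Fin N → F) →ₗ[F] V}
    (hu : IsPartialSpread u) : HasPartialSpread F N (finrank F V) (Fintype.card ι) :=
  ⟨_, (hu.map (LinearEquiv.ofFinrankEq V (Fin _ → F) (by simp)).injective).comp
    (Fintype.equivFin ι).symm.injective⟩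

theorem hasPartialSpread_one {N d : ℕ} (hNd : N ≤ d) : HasPartialSpread F N d 1 :=
  ⟨fun _ => Function.ExtendByZero.linearMap F (Fin.castLE hNd),
    fun _ => Function.extend_injective (Fin.castLE_injective hNd) 0,
    fun i j hij => (hij (Subsingleton.elim i j)).elim⟩

theorem HasPartialSpread.add_card_pow [Fintype F] {N d t : ℕ} (h : HasPartialSpread F N d t)
    (hd : 0 < d) (hNd : N ≤ d) : HasPartialSpread F N (N + d) (Fintype.card F ^ d + t) := by
  obtain ⟨u, hu⟩ := h
  have : Fact (ringChar F).Prime := ⟨CharP.char_is_prime F _⟩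
  have : NeZero d := ⟨hd.ne'⟩
  let K := FiniteField.Extension F (ringChar F) d
  have := Fintype.ofFinite K
  let e : (Fin d → F) ≃ₗ[F] K :=
    LinearEquiv.ofFinrankEq _ _ (by simp [K, FiniteField.finrank_extension])
  have hj : Function.Injective
      (e.toLinearMap ∘ₗ Function.ExtendByZero.linearMap F (Fin.castLE hNd)) :=
    e.injective.comp (Function.extend_injective (Fin.castLE_injective hNd) 0)
  convert ((hu.map e.injective).sumElim_graph hj).hasPartialSpread using 1
  · simp [K, FiniteField.finrank_extension]
  · rw [Fintype.card_sum, Fintype.card_fin, Fintype.card_eq_nat_card, Fintype.card_eq_nat_card,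
      FiniteField.natCard_extension]

theorem hasPartialSpread_one_add_sum [Fintype F] {N : ℕ} (hN : 0 < N) (s : ℕ) {k : ℕ}
    (hk : 1 ≤ k) :
    HasPartialSpread F N (k * N + s) (1 + ∑ i ∈ Ico 1 k, Fintype.card F ^ (i * N + s)) := by
  induction k, hk using Nat.le_induction with
  | base => simpa using hasPartialSpread_one (F := F) (Nat.le_add_right N s)
  | succ k hk ih =>
    have hkN : N ≤ k * N := Nat.le_mul_of_pos_left N hk
    rw [sum_Ico_succ_top hk]
    convert ih.add_card_pow (by positivity) (hkN.trans (Nat.le_add_right _ s)) using 1 <;> ring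

theorem pow_sub_one_mul_sum_add (q N s k : ℕ) (hq : 0 < q) :
    (q ^ N - 1) * ∑ i ∈ range k, q ^ (i * N + s) + q ^ s = q ^ (k * N + s) := by
  have h := geom_sum_mul_add (q ^ N - 1) k
  rw [Nat.sub_add_cancel (Nat.one_le_pow _ _ hq)] at h
  calc (q ^ N - 1) * ∑ i ∈ range k, q ^ (i * N + s) + q ^ s
      = ((∑ i ∈ range k, (q ^ N) ^ i) * (q ^ N - 1) + 1) * q ^ s := by
        simp only [pow_add, pow_mul', ← sum_mul]
        ring
    _ = q ^ (k * N + s) := by rw [h, pow_add, pow_mul']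

section Codes

variable {ℓ N : ℕ}

-- `open Classical` so that the filters below use the decidability instance of `srwt`.
open Classical in
theorem srwt_le_card {c : Fin ℓ → Fin N → F} {s : Finset (Fin ℓ)} (h : ∀ i ∉ s, c i = 0) :
    srwt c ≤ s.card :=
  card_le_card fun i hi => by_contra fun his => (mem_filter.1 hi).2 (h i his)

open Classical in
theorem exists_forall_eq_or_eq_of_srwt_le_two {c : Fin ℓ → Fin N → F} (hc : srwt c ≤ 2)
    {a : Fin ℓ} (ha : c a ≠ 0) : ∃ b, ∀ i, c i ≠ 0 → i = a ∨ i = b := by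
  have : Nonempty (Fin ℓ) := ⟨a⟩
  unfold srwt at hc
  set S := univ.filter fun i => c i ≠ 0
  have haS : a ∈ S := mem_filter.2 ⟨mem_univ a, ha⟩
  obtain ⟨b, hb⟩ := card_le_one_iff_subset_singleton.1
    (show (S.erase a).card ≤ 1 by rw [card_erase_of_mem haS]; omega)
  refine ⟨b, fun i hi => or_iff_not_imp_left.2 fun hia => ?_⟩
  exact mem_singleton.1 (hb (mem_erase.2 ⟨hia, mem_filter.2 ⟨mem_univ i, hi⟩⟩))

theorem isPartialSpread_mkQ_single {C : Submodule F (Fin ℓ → Fin N → F)}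
    (hC : ∀ c ∈ C, c ≠ 0 → 3 ≤ srwt c) :
    IsPartialSpread fun i => C.mkQ ∘ₗ LinearMap.single F (fun _ => Fin N → F) i := by
  classical
  have hC' : ∀ c ∈ C, srwt c ≤ 2 → c = 0 := fun c hc h2 => by
    by_contra h0
    have := hC c hc h0
    omega
  refine ⟨fun i => (injective_iff_map_eq_zero _).2 fun x hx => ?_, fun i j hij => ?_⟩
  · have hx' : Pi.single i x ∈ C := (Submodule.Quotient.mk_eq_zero C).1 hx
    have h1 : srwt (Pi.single (M := fun _ => Fin N → F) i x) ≤ 1 :=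
      (srwt_le_card (s := {i}) fun k hk => by simp [Pi.single_eq_of_ne (notMem_singleton.1 hk)]).trans
        (card_singleton i).le
    exact Pi.single_eq_zero_iff.1 (hC' _ hx' (h1.trans one_le_two))
  refine Submodule.disjoint_def.2 ?_
  rintro _ ⟨x, rfl⟩ ⟨y, hy⟩
  have hmem : Pi.single j y - Pi.single i x ∈ C := (Submodule.Quotient.eq C).1 hy
  have h2 : srwt (Pi.single (M := fun _ => Fin N → F) j y - Pi.single i x) ≤ 2 := by
    refine (srwt_le_card (s := {i, j}) fun k hk => ?_).trans card_le_two
    simp only [mem_insert, mem_singleton, not_or] at hk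
    simp [Pi.single_eq_of_ne hk.1, Pi.single_eq_of_ne hk.2]
  have hx : x = 0 := by
    simpa [Pi.single_eq_of_ne hij, eq_comm] using congrFun (sub_eq_zero.1 (hC' _ hmem h2)) i
  simp [hx]

theorem IsGoodCode.card_mul_le [Fintype F] {r : ℕ} {C : Submodule F (Fin ℓ → Fin N → F)}
    (hC : IsGoodCode F ℓ N r C) :
    ℓ * (Fintype.card F ^ N - 1) + 1 ≤ Fintype.card F ^ r := by
  have hQ : finrank F ((Fin ℓ → Fin N → F) ⧸ C) = r := by
    have := C.finrank_quotient_add_finrank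
    have := hC.2
    simp only [finrank_pi_fintype, finrank_self, sum_const, card_univ, Fintype.card_fin,
      smul_eq_mul, mul_one] at *
    omega
  have := Fintype.ofFinite ((Fin ℓ → Fin N → F) ⧸ C)
  simpa [Module.card_eq_pow_finrank (K := F) (V := (Fin ℓ → Fin N → F) ⧸ C), hQ] using
    (isPartialSpread_mkQ_single hC.1).card_mul_le

variable {V : Type*} [AddCommGroup V] [Module F V]

theorem IsPartialSpread.eq_zero_of_sum_eq_zero {t : ℕ} {u : Fin t → (Fin N → F) →ₗ[F] V}
    (hu : IsPartialSpread u) {c : Fin t → Fin N → F} (hsum : ∑ i, u i (c i) = 0)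
    (hc : srwt c ≤ 2) : c = 0 := by
  by_contra hc0
  obtain ⟨a, ha⟩ := Function.ne_iff.1 hc0
  obtain ⟨b, hab⟩ := exists_forall_eq_or_eq_of_srwt_le_two hc ha
  have hzero : ∀ i, i ≠ a → i ≠ b → u i (c i) = 0 := fun i hia hib => by
    by_contra h
    exact (hab i fun hci => h (by rw [hci, map_zero])).elim hia hib
  rcases eq_or_ne a b with rfl | hne
  · rw [Fintype.sum_eq_single a fun i hi => hzero i hi hi] at hsum
    exact ha ((map_eq_zero_iff _ (hu.1 a)).1 hsum)
  · rw [Fintype.sum_eq_add a b hne fun i hi => hzero i hi.1 hi.2, add_eq_zero_iff_eq_neg,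
      ← map_neg] at hsum
    exact ha (hu.eq_zero_of_apply_eq hne hsum)

theorem Submodule.exists_le_finrank_eq {K M : Type*} [DivisionRing K] [AddCommGroup M]
    [Module K M] (p : Submodule K M) {n : ℕ} (hn : n ≤ finrank K p) :
    ∃ q ≤ p, finrank K q = n := by
  obtain ⟨f, hf⟩ := exists_linearIndependent_of_le_finrank hn
  refine ⟨(span K (Set.range f)).map p.subtype, map_subtype_le _ _, ?_⟩
  rw [finrank_map_subtype_eq, finrank_span_eq_card hf, Fintype.card_fin]

theorem IsPartialSpread.exists_isGoodCode [FiniteDimensional F V] {t r : ℕ}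
    {u : Fin t → (Fin N → F) →ₗ[F] V} (hu : IsPartialSpread u) (hV : finrank F V ≤ r)
    (hr : r ≤ t * N) : ∃ C : Submodule F (Fin t → Fin N → F), IsGoodCode F t N r C := by
  let H := LinearMap.lsum F (fun _ => Fin N → F) F u
  have hH : ∀ c, H c = ∑ i, u i (c i) := fun c => by simp [H]
  have hker : t * N - r ≤ finrank F (LinearMap.ker H) := by
    have := H.finrank_range_add_finrank_ker
    have := (LinearMap.range H).finrank_le
    simp only [finrank_pi_fintype, finrank_self, sum_const, card_univ, Fintype.card_fin,
      smul_eq_mul, mul_one] at *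
    omega
  obtain ⟨C, hCker, hC⟩ := (LinearMap.ker H).exists_le_finrank_eq hker
  refine ⟨C, fun c hc hc0 => ?_, by omega⟩
  by_contra h3
  exact hc0 (hu.eq_zero_of_sum_eq_zero ((hH c).symm.trans (hCker hc)) (by omega))

theorem IsProperSRHamming.le_of_hasPartialSpread {r t : ℕ}
    {C : Submodule F (Fin ℓ → Fin N → F)} (hC : IsProperSRHamming F ℓ N r C)
    (ht : HasPartialSpread F N r t) : t ≤ ℓ := by
  obtain ⟨u, hu⟩ := ht
  by_contra! hlt
  have hr : r ≤ ℓ * N := hC.1.2 ▸ Nat.le_add_left r _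
  exact hC.2 t hlt (hu.exists_isGoodCode (by simp) (hr.trans (Nat.mul_le_mul_right N hlt.le)))

end Codes

end

/-- length bounds for proper sum-rank Hamming codes with `m = 1`:
`N((q^r − q^s)/(q^N − 1) − q^s + 1) ≤ n ≤ N(q^r − q^s)/(q^N − 1)` with `s = r % N`,
and `n = N(q^r − 1)/(q^N − 1)` when `s = 0`. -/
theorem proper_srHamming_length_bounds {F : Type*} [Field F] [Fintype F]
    {ℓ N r : ℕ} (hN : 0 < N) (hNr : N ≤ r)
    (C : Submodule F (Fin ℓ → Fin N → F)) (hC : IsProperSRHamming F ℓ N r C) :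
    (N * ((Fintype.card F ^ r - Fintype.card F ^ (r % N)) / (Fintype.card F ^ N - 1)
        - Fintype.card F ^ (r % N) + 1) ≤ ℓ * N ∧
      ℓ * N ≤ N * ((Fintype.card F ^ r - Fintype.card F ^ (r % N)) /
        (Fintype.card F ^ N - 1))) ∧
    (r % N = 0 →
      ℓ * N = N * ((Fintype.card F ^ r - 1) / (Fintype.card F ^ N - 1))) := by
  set q := Fintype.card F
  set s := r % N
  set k := r / N
  have hq : 1 < q := Fintype.one_lt_card
  have hr : k * N + s = r := Nat.div_add_mod' r N
  have hk : 1 ≤ k := (Nat.one_le_div_iff hN).2 hNr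
  have hQ : 0 < q ^ N - 1 := Nat.sub_pos_of_lt (Nat.one_lt_pow hN.ne' hq)
  have hsN : q ^ s < q ^ N := Nat.pow_lt_pow_right hq (Nat.mod_lt r hN)
  set G := ∑ i ∈ range k, q ^ (i * N + s)
  have hgeom : (q ^ N - 1) * G + q ^ s = q ^ r := hr ▸ pow_sub_one_mul_sum_add q N s k (by omega)
  have hG : (q ^ r - q ^ s) / (q ^ N - 1) = G := by
    rw [← hgeom, Nat.add_sub_cancel, Nat.mul_div_cancel_left _ hQ]
  have hupper : ℓ ≤ G := by
    have hcount : ℓ * (q ^ N - 1) + 1 ≤ q ^ r := hC.1.card_mul_le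
    by_contra! h
    have := Nat.mul_le_mul_right (q ^ N - 1) h
    rw [Nat.succ_mul, mul_comm G] at this
    omega
  have hlower : G - q ^ s + 1 ≤ ℓ := by
    have ht : 1 + ∑ i ∈ Ico 1 k, q ^ (i * N + s) ≤ ℓ :=
      hC.le_of_hasPartialSpread (hr ▸ hasPartialSpread_one_add_sum hN s hk)
    have hG' : G = q ^ s + ∑ i ∈ Ico 1 k, q ^ (i * N + s) := by
      simp [G, sum_range_eq_add_Ico _ hk]
    omega
  refine ⟨⟨?_, ?_⟩, fun hs0 => ?_⟩
  · rw [hG, mul_comm ℓ]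
    exact Nat.mul_le_mul_left N hlower
  · rw [hG, mul_comm ℓ]
    exact Nat.mul_le_mul_left N hupper
  · rw [hs0, pow_zero] at hG hlower
    rw [mul_comm ℓ, hG, le_antisymm hupper (by omega)]
end

section
/- For m = 1, equal sublengths N dividing r, and n = ℓN with ℓ = (q^r − 1)/(q^N − 1): the sum-rank metric ball of radius 1 centered at 0 in F_q^n has cardinality 1 + ℓ(q^N − 1) = q^r, and hence any linear code C ⊆ F_q^n of dimension n − r with d_SR(C) ≥ 3 is perfect for the sum-rank metric: |C| · |B_1| = q^n. -/
open Finset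

open Classical in
lemma ball_card {F : Type*} [Field F] [Fintype F] {ℓ N : ℕ} :
    Nat.card {c : Fin ℓ → Fin N → F // srwt c ≤ 1} = 1 + ℓ * (Fintype.card F ^ N - 1) := by
  classical
  rw [Nat.card_eq_fintype_card, Fintype.card_subtype]
  have hB : (univ.filter (fun c : Fin ℓ → Fin N → F => srwt c ≤ 1)) =
      insert 0 ((univ ×ˢ (univ.filter (fun v : Fin N → F => v ≠ 0))).image
        (fun p : Fin ℓ × (Fin N → F) => (Pi.single p.1 p.2 : Fin ℓ → Fin N → F))) := by
    ext c
    simp only [mem_insert, mem_image, mem_filter, mem_univ, true_and, mem_product]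
    constructor
    · intro h
      unfold srwt at h
      interval_cases h' : (univ.filter (fun i => c i ≠ 0)).card
      · left
        have he := Finset.card_eq_zero.mp h'
        have hz : ∀ i, c i = 0 := by
          intro i
          by_contra hi
          have : i ∈ univ.filter (fun i => c i ≠ 0) := by simp [hi]
          simp_all
        funext i
        exact hz i
      · right
        obtain ⟨i, hi⟩ := Finset.card_eq_one.mp h'
        have hci : c i ≠ 0 := by
          have : i ∈ univ.filter (fun i => c i ≠ 0) := hi ▸ Finset.mem_singleton_self i
          simpa using this
        refine ⟨⟨i, c i⟩, ⟨by simpa using hci, ?_⟩⟩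
        funext j
        by_cases hj : j = i
        · subst hj; simp
        · have hcj : c j = 0 := by
            have : j ∉ univ.filter (fun i => c i ≠ 0) := by
              rw [hi]; simpa using hj
            simp only [mem_filter, mem_univ, true_and, not_not] at this
            exact this
          rw [Pi.single_eq_of_ne hj, hcj]
    · rintro (rfl | ⟨⟨i, v⟩, ⟨hv, rfl⟩⟩)
      · unfold srwt
        simp
      · unfold srwt
        have hsub : (univ.filter (fun j => (Pi.single i v : Fin ℓ → Fin N → F) j ≠ 0)) ⊆ {i} := by
          intro j hj
          simp only [mem_filter, mem_univ, true_and] at hj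
          by_contra hji
          simp only [mem_singleton] at hji
          rw [Pi.single_eq_of_ne hji] at hj
          exact hj rfl
        calc _ ≤ ({i} : Finset (Fin ℓ)).card := Finset.card_le_card hsub
        _ = 1 := rfl
  have himg : ((univ ×ˢ (univ.filter (fun v : Fin N → F => v ≠ 0))).image
        (fun p : Fin ℓ × (Fin N → F) => (Pi.single p.1 p.2 : Fin ℓ → Fin N → F))).card
      = ℓ * (Fintype.card F ^ N - 1) := by
    rw [Finset.card_image_of_injOn]
    · rw [Finset.card_product, Finset.card_univ, Fintype.card_fin]
      congr 1
      rw [Finset.filter_ne', Finset.card_erase_of_mem (Finset.mem_univ 0), Finset.card_univ,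
        Fintype.card_fun, Fintype.card_fin]
    · rintro ⟨i, v⟩ hi ⟨j, w⟩ hj h
      simp only [Finset.coe_filter, mem_product, mem_filter, mem_univ, true_and,
        Set.mem_setOf_eq, Finset.mem_coe] at hi hj
      have hv : v ≠ 0 := by simpa using hi
      have hij : i = j := by
        by_contra hij
        have := congrFun h i
        simp only [Pi.single_eq_same, Pi.single_eq_of_ne hij] at this
        exact hv this
      subst hij
      have := congrFun h i
      simp only [Pi.single_eq_same] at this
      simp [this]
  have h0 : (0 : Fin ℓ → Fin N → F) ∉ ((univ ×ˢ (univ.filter (fun v : Fin N → F => v ≠ 0))).image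
        (fun p : Fin ℓ × (Fin N → F) => (Pi.single p.1 p.2 : Fin ℓ → Fin N → F))) := by
    simp only [mem_image, mem_product, mem_filter, mem_univ, true_and, not_exists]
    rintro ⟨i, v⟩ ⟨hv, h⟩
    exact hv (by simpa using congrFun h i)
  rw [hB, Finset.card_insert_of_notMem h0, himg, Nat.add_comm]

/-- for `m = 1`, `N ∣ r`, `ℓ = (q^r − 1)/(q^N − 1)` and `n = ℓN`, the
sum-rank ball of radius `1` around `0` has `1 + ℓ(q^N − 1) = q^r` elements, and any
linear code of dimension `n − r` with `d_SR(C) ≥ 3` is perfect: `|C|·|B_1| = q^n`. -/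
theorem srHamming_is_perfect {F : Type*} [Field F] [Fintype F]
    {ℓ N r : ℕ} (hN : 0 < N) (hNr : N ∣ r)
    (hℓ : ℓ * (Fintype.card F ^ N - 1) = Fintype.card F ^ r - 1) :
    Nat.card {c : Fin ℓ → Fin N → F // srwt c ≤ 1} = 1 + ℓ * (Fintype.card F ^ N - 1) ∧
    Nat.card {c : Fin ℓ → Fin N → F // srwt c ≤ 1} = Fintype.card F ^ r ∧
    ∀ C : Submodule F (Fin ℓ → Fin N → F),
      Module.finrank F C + r = ℓ * N →
      (∀ c ∈ C, c ≠ 0 → 3 ≤ srwt c) →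
      Nat.card C * Nat.card {c : Fin ℓ → Fin N → F // srwt c ≤ 1} =
        Fintype.card F ^ (ℓ * N) := by
  have h1 := ball_card (F := F) (ℓ := ℓ) (N := N)
  have hq : 1 ≤ Fintype.card F ^ r := Nat.one_le_pow _ _ Fintype.card_pos
  have h2 : Nat.card {c : Fin ℓ → Fin N → F // srwt c ≤ 1} = Fintype.card F ^ r := by
    rw [h1, hℓ, Nat.add_sub_cancel' hq]
  refine ⟨h1, h2, fun C hdim _ => ?_⟩
  have : Fintype C := Fintype.ofFinite _
  have hC : Nat.card C = Fintype.card F ^ Module.finrank F C := by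
    rw [Nat.card_eq_fintype_card]
    exact Module.card_eq_pow_finrank
  rw [hC, h2, ← pow_add, hdim]
end

section
/- Let N divide r, s = 0, and let C ⊆ F_q^n be a proper sum-rank simplex code of dimension r (the dual of a proper sum-rank Hamming code with m = 1, equal sublengths N, n = ℓN, ℓ = (q^r−1)/(q^N−1)). Then d_SR(C) ≥ ⌈q^{r−1}(q−1)/(q^N − 1)⌉. -/
open Matrix Finset

/-- let `N ∣ r` and let `C` be the proper sum-rank simplex code of
dimension `r`, i.e. the code generated by `H = (H_1,…,H_ℓ)` whose block column spaces
form a maximal-size partial `N`-spread (a spread, of size `ℓ = (q^r−1)/(q^N−1)`) in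
`F_q^r`. Then `d_SR(C) ≥ ⌈q^{r−1}(q−1)/(q^N − 1)⌉`. -/
theorem simplex_srDist_lower_bound {F : Type*} [Field F] [Fintype F]
    {ℓ N r : ℕ} (hN : 0 < N) (hNr : N ≤ r) (hdvd : N ∣ r)
    (H : Fin ℓ → Matrix (Fin r) (Fin N) F)
    (hdim : ∀ i, (H i).rank = N)
    (hspread : ∀ i j, i ≠ j →
      LinearMap.range (H i).mulVecLin ⊓ LinearMap.range (H j).mulVecLin = ⊥)
    (hmax : ℓ * (Fintype.card F ^ N - 1) = Fintype.card F ^ r - 1) :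
    ∀ x : Fin r → F, x ≠ 0 →
      (Fintype.card F ^ (r - 1) * (Fintype.card F - 1)) ⌈/⌉ (Fintype.card F ^ N - 1) ≤
        srwt (fun i => Matrix.vecMul x (H i)) := by
  classical
  intro x hx
  set q := Fintype.card F with hq
  have hq2 : 2 ≤ q := Fintype.one_lt_card
  have hE : 0 < q ^ N - 1 := by
    have : 2 ≤ q ^ N := le_trans hq2 (Nat.le_self_pow hN.ne' q)
    omega
  -- the linear functional v ↦ x ⬝ᵥ v
  let φ : (Fin r → F) →ₗ[F] F :=
    { toFun := fun v => x ⬝ᵥ v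
      map_add' := fun u v => dotProduct_add x u v
      map_smul' := fun c v => by simp [dotProduct_smul] }
  -- φ is surjective
  have hφsurj : Function.Surjective φ := by
    obtain ⟨j, hj⟩ := Function.ne_iff.mp hx
    intro c
    have hj' : x j ≠ 0 := by simpa using hj
    refine ⟨Pi.single j ((x j)⁻¹ * c), ?_⟩
    show x ⬝ᵥ Pi.single j ((x j)⁻¹ * c) = c
    rw [dotProduct_single, ← mul_assoc, mul_inv_cancel₀ hj', one_mul]
  have hkerdim : Module.finrank F (LinearMap.ker φ) = r - 1 := by
    have h1 := LinearMap.finrank_range_add_finrank_ker φ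
    rw [LinearMap.range_eq_top.mpr hφsurj] at h1
    simp [Module.finrank_fin_fun] at h1
    omega
  have hkercard : Fintype.card (LinearMap.ker φ) = q ^ (r - 1) := by
    rw [Module.card_eq_pow_finrank (K := F), hkerdim]
  -- the zero / nonzero block index sets
  set Z : Finset (Fin ℓ) := univ.filter (fun i => Matrix.vecMul x (H i) = 0) with hZ
  set S : Finset (Fin ℓ) := univ.filter (fun i => Matrix.vecMul x (H i) ≠ 0) with hS
  have hZS : Z.card + S.card = ℓ := by
    rw [hZ, hS, Finset.card_filter_add_card_filter_not]
    simp
  -- the finsets of nonzero vectors in each block's column space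
  let T : Fin ℓ → Finset (Fin r → F) :=
    fun i => (Set.toFinset (LinearMap.range (H i).mulVecLin : Set (Fin r → F))).erase 0
  have hTcard : ∀ i, (T i).card = q ^ N - 1 := by
    intro i
    have h0 : (0 : Fin r → F) ∈ Set.toFinset
        (LinearMap.range (H i).mulVecLin : Set (Fin r → F)) := by
      simp
    rw [Finset.card_erase_of_mem h0, Set.toFinset_card, ← Nat.card_eq_fintype_card]
    have : Nat.card (LinearMap.range (H i).mulVecLin) = q ^ N := by
      rw [Nat.card_eq_fintype_card, Module.card_eq_pow_finrank (K := F)]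
      congr 1
      exact hdim i
    simp only [SetLike.coe_sort_coe]
    rw [this]
  -- for zero blocks, columns space lies in ker φ
  have hsub : ∀ i ∈ Z, T i ⊆ (Set.toFinset (LinearMap.ker φ : Set (Fin r → F))).erase 0 := by
    intro i hi v hv
    simp only [T, Finset.mem_erase, Set.mem_toFinset, SetLike.mem_coe,
      LinearMap.mem_range] at hv ⊢
    obtain ⟨hv0, u, hu⟩ := hv
    refine ⟨hv0, ?_⟩
    have hiz : Matrix.vecMul x (H i) = 0 := by
      simpa [hZ] using hi
    show x ⬝ᵥ v = 0
    rw [← hu]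
    rw [Matrix.mulVecLin_apply, Matrix.dotProduct_mulVec, hiz, zero_dotProduct]
  -- pairwise disjoint
  have hdisj : (Z : Set (Fin ℓ)).PairwiseDisjoint T := by
    intro i _ j _ hij
    refine Finset.disjoint_left.mpr ?_
    intro v hvi hvj
    simp only [T, Finset.mem_erase, Set.mem_toFinset, SetLike.mem_coe] at hvi hvj
    have : v ∈ LinearMap.range (H i).mulVecLin ⊓ LinearMap.range (H j).mulVecLin :=
      ⟨hvi.2, hvj.2⟩
    rw [hspread i j hij] at this
    exact hvi.1 (by simpa using this)
  -- the key counting bound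
  have hcount : Z.card * (q ^ N - 1) ≤ q ^ (r - 1) - 1 := by
    have h1 : (Z.biUnion T).card = ∑ i ∈ Z, (T i).card :=
      Finset.card_biUnion (fun i hi j hj hij => hdisj hi hj hij)
    have h2 : Z.biUnion T ⊆ (Set.toFinset (LinearMap.ker φ : Set (Fin r → F))).erase 0 := by
      intro v hv
      obtain ⟨i, hi, hvi⟩ := Finset.mem_biUnion.mp hv
      exact hsub i hi hvi
    have h3 : ((Set.toFinset (LinearMap.ker φ : Set (Fin r → F))).erase 0).card
        = q ^ (r - 1) - 1 := by
      rw [Finset.card_erase_of_mem (by simp), Set.toFinset_card]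
      simp only [SetLike.coe_sort_coe]
      rw [hkercard]
    calc Z.card * (q ^ N - 1) = ∑ i ∈ Z, (T i).card := by
          rw [Finset.sum_congr rfl (fun i _ => hTcard i), Finset.sum_const, smul_eq_mul]
      _ = (Z.biUnion T).card := h1.symm
      _ ≤ q ^ (r - 1) - 1 := h3 ▸ Finset.card_le_card h2
  -- wrap up arithmetic
  have hsrwt : srwt (fun i => Matrix.vecMul x (H i)) = S.card := rfl
  rw [hsrwt, ceilDiv_le_iff_le_mul hE]
  have hA : 1 ≤ q ^ (r - 1) := Nat.one_le_pow _ _ (by omega)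
  have hqr : q ^ r = q ^ (r - 1) * q := by
    conv_lhs => rw [show r = (r - 1) + 1 by omega]
    ring
  have hmul : S.card * (q ^ N - 1) + Z.card * (q ^ N - 1) = q ^ (r - 1) * q - 1 := by
    rw [← Nat.add_mul, Nat.add_comm S.card, hZS, hmax, hqr]
  have key : q ^ (r - 1) * (q - 1) ≤ S.card * (q ^ N - 1) := by
    have : q ^ (r - 1) * (q - 1) = q ^ (r - 1) * q - q ^ (r - 1) := by
      rw [Nat.mul_sub, Nat.mul_one]
    omega
  calc q ^ (r - 1) * (q - 1) ≤ S.card * (q ^ N - 1) := key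
    _ = (q ^ N - 1) * S.card := Nat.mul_comm _ _
end
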